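/- arXiv:2204.10309 — 4 statements merged into one kernel-verified Lean document; each statement's English description precedes it below -/
import Mathlib

section
/- Let t_0,...,t_b and s_0,...,s_b be nonnegative reals with ∑_{j≤b} t_j < 0.9·∑_{j≤b} s_j. Then there exists b' ≤ b such that ∑_{b'≤j≤b} t_j·100^{-j} < 0.9·∑_{b'≤j≤b} s_j·100^{-j}. -/
/-!
Set `g j := (t j - 0.9 s j) 100^{-j}`. If the conclusion failed, every tail sum `∑_{k ≤ j ≤ b} g j`
would be nonnegative, and then so would `∑_{j ≤ b} 100^j g j = ∑_{j ≤ b} (t j - 0.9 s j)` by Abel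
summation, because the weights `100^j` are increasing.
-/

open Finset

theorem mul_sum_Icc_le_sum_mul_of_monotone {R : Type*} [CommRing R] [LinearOrder R]
    [IsStrictOrderedRing R] {c g : ℕ → R} {b : ℕ} (hc : Monotone c)
    (hg : ∀ k ≤ b, 0 ≤ ∑ j ∈ Icc k b, g j) {k : ℕ} (hk : k ≤ b) :
    c k * ∑ j ∈ Icc k b, g j ≤ ∑ j ∈ Icc k b, c j * g j := by
  induction hk using Nat.decreasingInduction with
  | self => simp
  | of_succ k hkb ih =>
    rw [Icc_eq_cons_Ioc hkb.le, sum_cons, sum_cons, ← Icc_add_one_left_eq_Ioc, mul_add]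
    have hweight : c k * ∑ j ∈ Icc (k + 1) b, g j ≤ c (k + 1) * ∑ j ∈ Icc (k + 1) b, g j :=
      mul_le_mul_of_nonneg_right (hc k.le_succ) (hg (k + 1) hkb)
    linarith

theorem stmt2_general (b : ℕ) (t s : ℕ → ℝ)
    (h : ∑ j ∈ Finset.range (b + 1), t j < 0.9 * ∑ j ∈ Finset.range (b + 1), s j) :
    ∃ b' ≤ b, ∑ j ∈ Finset.Icc b' b, t j * ((100 : ℝ) ^ j)⁻¹
      < 0.9 * ∑ j ∈ Finset.Icc b' b, s j * ((100 : ℝ) ^ j)⁻¹ := by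
  by_contra! htails
  have hg : ∀ k ≤ b, 0 ≤ ∑ j ∈ Icc k b, (t j - 0.9 * s j) * ((100 : ℝ) ^ j)⁻¹ := by
    intro k hk
    simp only [sub_mul, sum_sub_distrib, mul_assoc, ← mul_sum]
    linarith [htails k hk]
  have habel :=
    mul_sum_Icc_le_sum_mul_of_monotone (pow_right_mono₀ (by norm_num : (1 : ℝ) ≤ 100)) hg b.zero_le
  have hcancel : ∀ j, (100 : ℝ) ^ j * ((t j - 0.9 * s j) * ((100 : ℝ) ^ j)⁻¹) = t j - 0.9 * s j :=
    fun j => by field_simp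
  have htail0 := hg 0 b.zero_le
  simp only [hcancel, sum_sub_distrib, ← mul_sum, ← Nat.range_succ_eq_Icc_zero, pow_zero,
    one_mul] at habel htail0
  linarith

/-- If `t_0,…,t_b, s_0,…,s_b ≥ 0` and `∑_{j≤b} t_j < 0.9 ∑_{j≤b} s_j`, then there is
`b' ≤ b` with `∑_{b'≤j≤b} t_j 100^{-j} < 0.9 ∑_{b'≤j≤b} s_j 100^{-j}`. -/
theorem stmt2 (b : ℕ) (t s : ℕ → ℝ) (ht : ∀ j, 0 ≤ t j) (hs : ∀ j, 0 ≤ s j)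
    (h : ∑ j ∈ Finset.range (b + 1), t j < 0.9 * ∑ j ∈ Finset.range (b + 1), s j) :
    ∃ b' ≤ b, ∑ j ∈ Finset.Icc b' b, t j * ((100 : ℝ) ^ j)⁻¹
      < 0.9 * ∑ j ∈ Finset.Icc b' b, s j * ((100 : ℝ) ^ j)⁻¹ :=
  stmt2_general b t s h
end

section
/- Let a_j := log_{100}(2·100^4·(j+1)^2) · (J/4)^{−0.9·max{1, 100^j/(100^4(j+1)^2)}} for j ≥ 0. Then for J sufficiently large, ∑_{j≥0} a_j converges and exp(∑_{j≥0} a_j) − 1 ≤ J^{−c} for some absolute constant c > 0. -/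
open Real

lemma cube_le (k : ℕ) : (k+1)^3 ≤ 100^k := by
  induction k with
  | zero => norm_num
  | succ k ih =>
    have : (k+2)^3 ≤ 8 * (k+1)^3 := by ring_nf; omega
    calc (k+1+1)^3 ≤ 8 * (k+1)^3 := this
      _ ≤ 8 * 100^k := by omega
      _ ≤ 100^(k+1) := by ring_nf; omega

lemma mySq_le (j : ℕ) : (j+1)^2 ≤ 100^j := by
  induction j with
  | zero => norm_num
  | succ j ih =>
    have : (j+2)^2 ≤ 4 * (j+1)^2 := by ring_nf; omega
    calc (j+1+1)^2 ≤ 4 * (j+1)^2 := this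
      _ ≤ 4 * 100^j := by omega
      _ ≤ 100^(j+1) := by ring_nf; omega

lemma nat2 (k : ℕ) : 100000000 * ((k+11)^2 * (k+1)) ≤ 100^(k+10) := by
  have h1 : (k+11)^2 * (k+1) ≤ 121 * (k+1)^3 := by ring_nf; nlinarith [sq_nonneg k, k.zero_le]
  have h2 := cube_le k
  calc 100000000 * ((k+11)^2 * (k+1)) ≤ 100000000 * (121 * (k+1)^3) := by
        exact Nat.mul_le_mul_left _ h1
    _ ≤ 100000000 * (121 * 100^k) := by
        have := Nat.mul_le_mul_left 121 h2; exact Nat.mul_le_mul_left _ this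
    _ ≤ 100^(k+10) := by
        have : (100:ℕ)^(k+10) = 100^10 * 100^k := by ring
        rw [this]; have : (100:ℕ)^10 = 100000000000000000000 := by norm_num
        nlinarith [Nat.one_le_two_pow (n := k)]

lemma maxBound (j : ℕ) : (j:ℝ) - 9 ≤ max 1 ((100:ℝ)^j / (100^4 * ((j:ℝ)+1)^2)) := by
  rcases le_or_gt 10 j with h | h
  · obtain ⟨k, rfl⟩ := Nat.exists_eq_add_of_le h
    refine le_trans ?_ (le_max_right _ _)
    have hden : (0:ℝ) < 100^4 * (((10+k:ℕ):ℝ)+1)^2 := by positivity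
    rw [le_div_iff₀ hden]
    have := nat2 k
    have hcast : (100000000:ℝ) * (((k:ℝ)+11)^2 * ((k:ℝ)+1)) ≤ 100^(k+10) := by
      exact_mod_cast this
    push_cast
    rw [show (100:ℝ)^(10+k) = 100^(k+10) by rw [add_comm]]
    nlinarith [hcast]
  · have : (j:ℝ) ≤ 9 := by exact_mod_cast Nat.lt_succ_iff.mp h
    refine le_trans ?_ (le_max_left _ _)
    linarith

lemma logbBound (j : ℕ) : Real.logb 100 (2 * 100 ^ 4 * ((j : ℝ) + 1) ^ 2) ≤ (j:ℝ) + 5 := by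
  have h1 : (2:ℝ) * 100 ^ 4 * ((j : ℝ) + 1) ^ 2 ≤ (100:ℝ) ^ ((j:ℝ) + 5) := by
    have := mySq_le j
    have hc : ((j:ℝ)+1)^2 ≤ (100:ℝ)^j := by exact_mod_cast this
    have : (100:ℝ) ^ ((j:ℝ) + 5) = 100^(j+5 : ℕ) := by
      rw [← Real.rpow_natCast 100 (j+5)]; push_cast; ring_nf
    rw [this]
    have : (100:ℝ)^(j+5:ℕ) = 100^5 * 100^j := by ring
    rw [this]
    nlinarith [pow_pos (show (0:ℝ) < 100 by norm_num) j]
  calc Real.logb 100 (2 * 100 ^ 4 * ((j : ℝ) + 1) ^ 2)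
      ≤ Real.logb 100 ((100:ℝ) ^ ((j:ℝ) + 5)) :=
        Real.logb_le_logb_of_le (by norm_num) (by positivity) h1
    _ = (j:ℝ) + 5 := Real.logb_rpow (by norm_num) (by norm_num)

/-- `a_j = log_{100}(2·100^4 (j+1)^2) · (J/4)^{-0.9 max{1, 100^j/(100^4 (j+1)^2)}}`. -/
noncomputable def aSeq (J : ℝ) (j : ℕ) : ℝ :=
  Real.logb 100 (2 * 100 ^ 4 * ((j : ℝ) + 1) ^ 2) *
    (J / 4) ^ (-(0.9 * max 1 ((100 : ℝ) ^ j / (100 ^ 4 * ((j : ℝ) + 1) ^ 2))))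

lemma q_half : (100:ℝ) ^ (-(0.9:ℝ)) ≤ 1/2 := by
  have h10 : (10:ℝ) ≤ (100:ℝ) ^ ((0.9):ℝ) := by
    have h1 : (100:ℝ) ^ ((1/2):ℝ) = 10 := by
      rw [show (100:ℝ) = 10 ^ (2:ℕ) by norm_num, ← Real.rpow_natCast (10:ℝ) 2,
        ← Real.rpow_mul (by norm_num)]
      norm_num
    calc (10:ℝ) = (100:ℝ) ^ ((1/2):ℝ) := h1.symm
      _ ≤ (100:ℝ) ^ ((0.9):ℝ) := Real.rpow_le_rpow_of_exponent_le (by norm_num) (by norm_num)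
  rw [Real.rpow_neg (by norm_num)]
  have hpos : (0:ℝ) < (100:ℝ) ^ ((0.9):ℝ) := Real.rpow_pos_of_pos (by norm_num) _
  calc ((100:ℝ) ^ ((0.9):ℝ))⁻¹ ≤ (10:ℝ)⁻¹ := by
        apply inv_anti₀ (by norm_num) h10
    _ ≤ 1/2 := by norm_num

lemma aSeq_nonneg (J : ℝ) (hJ : 0 ≤ J) (j : ℕ) : 0 ≤ aSeq J j := by
  apply mul_nonneg
  · apply Real.logb_nonneg (by norm_num)
    nlinarith [sq_nonneg ((j:ℝ)+1), (j:ℕ).cast_nonneg (α := ℝ)]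
  · exact Real.rpow_nonneg (by linarith) _

lemma pointwise (J : ℝ) (hJ : 400 ≤ J) (j : ℕ) :
    aSeq J j ≤ (((j:ℝ)+5) * (1/2)^j) * (10^18 * (J/4) ^ (-(0.9:ℝ))) := by
  have hx : (100:ℝ) ≤ J/4 := by linarith
  have hx0 : (0:ℝ) < J/4 := by linarith
  set m : ℝ := max 1 ((100 : ℝ) ^ j / (100 ^ 4 * ((j : ℝ) + 1) ^ 2)) with hmdef
  have hm1 : (1:ℝ) ≤ m := le_max_left _ _
  have hmj : (j:ℝ) - 9 ≤ m := maxBound j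
  have hL0 : 0 ≤ Real.logb 100 (2 * 100 ^ 4 * ((j : ℝ) + 1) ^ 2) := by
    apply Real.logb_nonneg (by norm_num)
    nlinarith [sq_nonneg ((j:ℝ)+1), (j:ℕ).cast_nonneg (α := ℝ)]
  have hL := logbBound j
  have split : (J/4) ^ (-(0.9 * m)) = (J/4) ^ (-(0.9:ℝ)) * (J/4) ^ (-(0.9*(m-1))) := by
    rw [← Real.rpow_add hx0]; ring_nf
  have h1 : (J/4) ^ (-(0.9*(m-1))) ≤ (100:ℝ) ^ (-(0.9*(m-1))) :=
    Real.rpow_le_rpow_of_nonpos (by norm_num) hx (by nlinarith)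
  have h2 : (100:ℝ) ^ (-(0.9*(m-1))) ≤ (100:ℝ) ^ (-(0.9*((j:ℝ)-10))) :=
    Real.rpow_le_rpow_of_exponent_le (by norm_num) (by nlinarith)
  have h3 : (100:ℝ) ^ (-(0.9*((j:ℝ)-10))) = 10^18 * ((100:ℝ) ^ (-(0.9:ℝ)))^j := by
    rw [← Real.rpow_natCast ((100:ℝ) ^ (-(0.9:ℝ))) j, ← Real.rpow_mul (by norm_num),
      show (10:ℝ)^18 = (100:ℝ) ^ ((9:ℕ):ℝ) by rw [Real.rpow_natCast]; norm_num,
      ← Real.rpow_add (by norm_num)]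
    ring_nf
  have h4 : ((100:ℝ) ^ (-(0.9:ℝ)))^j ≤ ((1:ℝ)/2)^j :=
    pow_le_pow_left₀ (Real.rpow_nonneg (by norm_num) _) q_half j
  have key : (J/4) ^ (-(0.9 * m)) ≤ (J/4) ^ (-(0.9:ℝ)) * (10^18 * (1/2)^j) := by
    rw [split]
    apply mul_le_mul_of_nonneg_left _ (Real.rpow_nonneg hx0.le _)
    calc (J/4) ^ (-(0.9*(m-1))) ≤ (100:ℝ) ^ (-(0.9*(m-1))) := h1
      _ ≤ (100:ℝ) ^ (-(0.9*((j:ℝ)-10))) := h2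
      _ = 10^18 * ((100:ℝ) ^ (-(0.9:ℝ)))^j := h3
      _ ≤ 10^18 * (1/2)^j := by
          apply mul_le_mul_of_nonneg_left h4 (by norm_num)
  calc aSeq J j ≤ ((j:ℝ)+5) * ((J/4) ^ (-(0.9:ℝ)) * (10^18 * (1/2)^j)) := by
        apply mul_le_mul hL key (Real.rpow_nonneg hx0.le _) (by positivity)
    _ = (((j:ℝ)+5) * (1/2)^j) * (10^18 * (J/4) ^ (-(0.9:ℝ))) := by ring

/-- For `J` sufficiently large, `∑_{j≥0} a_j` converges and
`exp(∑_{j≥0} a_j) - 1 ≤ J^{-c}` for some absolute constant `c > 0`. -/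
theorem stmt5 : ∃ c : ℝ, 0 < c ∧ ∃ J₀ : ℝ, ∀ J : ℝ, J₀ ≤ J →
    Summable (aSeq J) ∧ Real.exp (∑' j : ℕ, aSeq J j) - 1 ≤ J ^ (-c) := by
  refine ⟨0.1, by norm_num, 10^60, fun J hJ => ?_⟩
  have hJ400 : (400:ℝ) ≤ J := le_trans (by norm_num) hJ
  have hJ1 : (1:ℝ) ≤ J := le_trans (by norm_num) hJ
  have hJ0 : (0:ℝ) < J := by linarith
  have hnorm : ‖(1/2 : ℝ)‖ < 1 := by rw [Real.norm_eq_abs, abs_of_pos] <;> norm_num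
  have s1 : Summable (fun j:ℕ => (j:ℝ) * (1/2)^j) := by
    have := summable_pow_mul_geometric_of_norm_lt_one (R := ℝ) 1 hnorm
    simpa using this
  have s2 : Summable (fun j:ℕ => (5:ℝ) * (1/2)^j) :=
    (summable_geometric_of_lt_one (by norm_num) (by norm_num)).mul_left 5
  have s3 : Summable (fun j:ℕ => ((j:ℝ)+5) * (1/2)^j) :=
    (s1.add s2).congr (fun j => by ring)
  have sg : Summable (fun j:ℕ => (((j:ℝ)+5)*(1/2)^j) * (10^18 * (J/4) ^ (-(0.9:ℝ)))) :=
    s3.mul_right _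
  have hsum : Summable (aSeq J) :=
    Summable.of_nonneg_of_le (aSeq_nonneg J hJ0.le) (pointwise J hJ400) sg
  refine ⟨hsum, ?_⟩
  have h12 : ∑' j:ℕ, (((j:ℝ)+5)*(1/2)^j) = 12 := by
    rw [tsum_congr (g := fun j:ℕ => (j:ℝ)*(1/2)^j + 5*(1/2)^j) (fun j => by ring),
      Summable.tsum_add s1 s2, tsum_coe_mul_geometric_of_norm_lt_one hnorm, tsum_mul_left,
      tsum_geometric_of_lt_one (by norm_num) (by norm_num)]
    norm_num
  have hts : ∑' j, aSeq J j ≤ 12 * (10^18 * (J/4) ^ (-(0.9:ℝ))) := by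
    calc ∑' j, aSeq J j
        ≤ ∑' j:ℕ, (((j:ℝ)+5)*(1/2)^j) * (10^18 * (J/4) ^ (-(0.9:ℝ))) :=
          Summable.tsum_le_tsum (pointwise J hJ400) hsum sg
      _ = (∑' j:ℕ, ((j:ℝ)+5)*(1/2)^j) * (10^18 * (J/4) ^ (-(0.9:ℝ))) := tsum_mul_right
      _ = 12 * (10^18 * (J/4) ^ (-(0.9:ℝ))) := by rw [h12]
  have hD : (J/4) ^ (-(0.9:ℝ)) ≤ J ^ (-(0.45:ℝ)) := by
    have hs : J ^ ((1/2):ℝ) ≤ J / 4 := by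
      have h16 : (16:ℝ) ≤ J := le_trans (by norm_num) hJ
      rw [← Real.sqrt_eq_rpow]
      have h' : Real.sqrt J ≤ Real.sqrt ((J/4)^2) := Real.sqrt_le_sqrt (by nlinarith)
      rwa [Real.sqrt_sq (by linarith)] at h'
    have hpos : (0:ℝ) < J ^ ((1/2):ℝ) := Real.rpow_pos_of_pos hJ0 _
    have h2 := Real.rpow_le_rpow_of_nonpos hpos hs (show -(0.9:ℝ) ≤ 0 by norm_num)
    rwa [← Real.rpow_mul hJ0.le,
      show ((1:ℝ)/2) * (-(0.9:ℝ)) = -(0.45:ℝ) by norm_num] at h2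
  have h35 : (24:ℝ)*10^18 ≤ J ^ ((0.35):ℝ) := by
    have h13 : ((10:ℝ)^60) ^ ((1/3):ℝ) = 10^20 := by
      rw [show (10:ℝ)^60 = ((10:ℝ)^20)^(3:ℕ) by norm_num,
        ← Real.rpow_natCast ((10:ℝ)^20) 3, ← Real.rpow_mul (by positivity)]
      norm_num
    calc (24:ℝ)*10^18 ≤ 10^20 := by norm_num
      _ = ((10:ℝ)^60) ^ ((1/3):ℝ) := h13.symm
      _ ≤ J ^ ((1/3):ℝ) := Real.rpow_le_rpow (by positivity) hJ (by norm_num)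
      _ ≤ J ^ ((0.35):ℝ) := Real.rpow_le_rpow_of_exponent_le hJ1 (by norm_num)
  have hfinal : 2 * (12 * (10^18 * J ^ (-(0.45:ℝ)))) ≤ J ^ (-(0.1:ℝ)) := by
    have hadd : J ^ ((0.35):ℝ) * J ^ (-(0.45:ℝ)) = J ^ (-(0.1:ℝ)) := by
      rw [← Real.rpow_add hJ0]; norm_num
    calc 2 * (12*(10^18 * J ^ (-(0.45:ℝ)))) = (24*10^18) * J ^ (-(0.45:ℝ)) := by ring
      _ ≤ J ^ ((0.35):ℝ) * J ^ (-(0.45:ℝ)) :=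
          mul_le_mul_of_nonneg_right h35 (Real.rpow_nonneg hJ0.le _)
      _ = J ^ (-(0.1:ℝ)) := hadd
  set s := ∑' j, aSeq J j with hsdef
  have hs0 : 0 ≤ s := tsum_nonneg (aSeq_nonneg J hJ0.le)
  have hsB : s ≤ 12 * (10^18 * J ^ (-(0.45:ℝ))) := by
    refine le_trans hts ?_
    have := mul_le_mul_of_nonneg_left hD (show (0:ℝ) ≤ 10^18 by norm_num)
    nlinarith [this]
  have hs2 : 2*s ≤ J ^ (-(0.1:ℝ)) := by nlinarith [hfinal, hsB]
  have hsle : s ≤ 1/2 := by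
    have h1' : J ^ (-(0.1:ℝ)) ≤ 1 := Real.rpow_le_one_of_one_le_of_nonpos hJ1 (by norm_num)
    linarith
  have hpos1 : (0:ℝ) < 1 - s := by linarith
  have hexp : Real.exp s ≤ (1-s)⁻¹ := by
    have hle := Real.add_one_le_exp (-s)
    rw [Real.exp_neg] at hle
    have hEpos : 0 < Real.exp s := Real.exp_pos s
    calc Real.exp s = ((Real.exp s)⁻¹)⁻¹ := by rw [inv_inv]
      _ ≤ (1-s)⁻¹ := by apply inv_anti₀ hpos1; linarith
  calc Real.exp s - 1 ≤ (1-s)⁻¹ - 1 := by linarith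
    _ = s / (1-s) := by field_simp; ring
    _ ≤ s / (1/2) := by gcongr; linarith
    _ = 2*s := by ring
    _ ≤ J ^ (-(0.1:ℝ)) := hs2
end

section
/- Let μ be a probability measure on a finite set X, N a positive integer, and G a multiset over X with N·μ(x) ≤ G(x) for all x ∈ G. Let X_1,...,X_N be i.i.d. samples from μ and define g̃(x) = log(N·μ(x)/G(x)) for x ∈ G and g̃(x) = 0 otherwise. Then E[exp(−∑_{i=1}^N g̃(X_i))] ≤ (1 + |G|/N)^N. -/
/-- Let `μ` be a probability measure on a finite set `X`, `G` a multiset over `X` with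
`N μ(x) ≤ G(x)` whenever `G(x) > 0`, and `g̃(x) = log(N μ(x)/G(x))` for `x ∈ G`, `0` otherwise.
For `X_1,…,X_N` i.i.d. from `μ`, `E[exp(-∑ g̃(X_i))] ≤ (1 + |G|/N)^N`. -/
theorem stmt7 {X : Type*} [Fintype X] (μ : X → ℝ) (hμ0 : ∀ x, 0 ≤ μ x)
    (hμ1 : ∑ x, μ x = 1) (N : ℕ) (hN : 0 < N) (G : X → ℕ)
    (hG : ∀ x, 0 < G x → (N : ℝ) * μ x ≤ (G x : ℝ)) :
    ∑ ω : Fin N → X, (∏ i, μ (ω i)) *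
      Real.exp (-∑ i, (if 0 < G (ω i)
        then Real.log ((N : ℝ) * μ (ω i) / (G (ω i) : ℝ)) else 0))
      ≤ (1 + (∑ x, (G x : ℝ)) / N) ^ N := by
  set g : X → ℝ := fun x =>
    μ x * Real.exp (-(if 0 < G x then Real.log ((N : ℝ) * μ x / (G x : ℝ)) else 0)) with hg
  have key : ∑ ω : Fin N → X, (∏ i, μ (ω i)) *
      Real.exp (-∑ i, (if 0 < G (ω i)
        then Real.log ((N : ℝ) * μ (ω i) / (G (ω i) : ℝ)) else 0))
      = (∑ x, g x) ^ N := by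
    have := (Fintype.prod_sum (κ := fun _ : Fin N => X) (fun _ x => g x)).symm
    rw [Finset.prod_const, Finset.card_univ, Fintype.card_fin] at this
    rw [← this]
    refine Finset.sum_congr rfl fun ω _ => ?_
    rw [hg]
    simp only [← Finset.sum_neg_distrib, Real.exp_sum, Finset.prod_mul_distrib]
  rw [key]
  have hbound : ∑ x, g x ≤ 1 + (∑ x, (G x : ℝ)) / N := by
    rw [← hμ1, Finset.sum_div, ← Finset.sum_add_distrib]
    refine Finset.sum_le_sum fun x _ => ?_
    rw [hg]
    by_cases h : 0 < G x
    · simp only [h, if_pos]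
      rcases eq_or_lt_of_le (hμ0 x) with h0 | h0
      · simp [← h0]
        positivity
      · have hq : 0 < (N : ℝ) * μ x / (G x : ℝ) := by positivity
        rw [Real.exp_neg, Real.exp_log hq]
        have : μ x * ((N : ℝ) * μ x / (G x : ℝ))⁻¹ = (G x : ℝ) / N := by
          field_simp
        rw [this]
        linarith [hμ0 x]
    · simp only [h, if_neg, not_false_iff, neg_zero, Real.exp_zero, mul_one]
      have : 0 ≤ (G x : ℝ) / N := by positivity
      linarith
  have hg0 : 0 ≤ ∑ x, g x := Finset.sum_nonneg fun x _ => by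
    simp only [hg]; exact mul_nonneg (hμ0 x) (Real.exp_pos _).le
  exact pow_le_pow_left₀ hg0 hbound N
end

section
/- For positive integers N and M with N ≤ M: if W̃ is the multiset of M i.i.d. samples from a distribution μ on a finite set X and W is the multiset of N i.i.d. samples from μ, then for any finite family F of multisets with nonnegative weights λ^S, E[sup_{S ∈ F} ∑_{i ∈ X} W(i)·λ^S(i)] ≥ (N/M) · E[sup_{S ∈ F} ∑_{i ∈ X} W̃(i)·λ^S(i)]. -/
open Finset



lemma aux_card_filter {M N : ℕ} (hN : 0 < N) (i : Fin M) :
    ((Finset.powersetCard N (Finset.univ : Finset (Fin M))).filter (fun A => i ∈ A)).card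
      = (M - 1).choose (N - 1) := by
  classical
  have hc : ((Finset.univ : Finset (Fin M)).erase i).card = M - 1 := by
    rw [Finset.card_erase_of_mem (mem_univ i), Finset.card_univ, Fintype.card_fin]
  rw [show (M - 1).choose (N - 1)
      = (Finset.powersetCard (N - 1) ((Finset.univ : Finset (Fin M)).erase i)).card from by
    rw [Finset.card_powersetCard, hc]]
  refine Finset.card_bij' (fun A _ => A.erase i) (fun B _ => insert i B) ?_ ?_ ?_ ?_
  · intro A hA
    simp only [mem_filter, mem_powersetCard] at hA
    simp only [mem_powersetCard]
    refine ⟨fun x hx => ?_, ?_⟩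
    · simp only [mem_erase] at hx ⊢; exact ⟨hx.1, mem_univ _⟩
    · rw [Finset.card_erase_of_mem hA.2, hA.1.2]
  · intro B hB
    simp only [mem_powersetCard] at hB
    simp only [mem_filter, mem_powersetCard]
    have hiB : i ∉ B := fun h => (mem_erase.1 (hB.1 h)).1 rfl
    refine ⟨⟨fun x _ => mem_univ _, ?_⟩, mem_insert_self _ _⟩
    rw [Finset.card_insert_of_notMem hiB, hB.2]
    omega
  · intro A hA
    simp only [mem_filter] at hA
    exact Finset.insert_erase hA.2
  · intro B hB
    simp only [mem_powersetCard] at hB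
    have hiB : i ∉ B := fun h => (mem_erase.1 (hB.1 h)).1 rfl
    exact Finset.erase_insert hiB

section Marg
variable {X ι : Type*} [Fintype X] [Fintype ι] [Nonempty ι]

lemma aux_sum_prod (μ : X → ℝ) (hμ1 : ∑ x, μ x = 1) (B : Type*) [Fintype B] [DecidableEq B] :
    ∑ g : B → X, ∏ b : B, μ (g b) = 1 := by
  classical
  rw [← Fintype.prod_sum (fun (_ : B) (x : X) => μ x)]
  simp [hμ1]

lemma aux_reindex (μ : X → ℝ) (lam : ι → X → ℝ) {B C : Type*} [Fintype B] [Fintype C] [DecidableEq B] [DecidableEq C]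
    (e : B ≃ C) :
    ∑ f : B → X, (∏ b, μ (f b)) *
        (Finset.univ.sup' Finset.univ_nonempty fun s => ∑ b, lam s (f b))
    = ∑ g : C → X, (∏ c, μ (g c)) *
        (Finset.univ.sup' Finset.univ_nonempty fun s => ∑ c, lam s (g c)) := by
  apply Fintype.sum_equiv (Equiv.arrowCongr e (Equiv.refl X))
  intro f
  congr 1
  · exact (Equiv.prod_comp e.symm (fun b => μ (f b))).symm
  · apply Finset.sup'_congr _ rfl
    intro s _
    exact (Equiv.sum_comp e.symm (fun b => lam s (f b))).symm

lemma aux_marg (μ : X → ℝ) (hμ1 : ∑ x, μ x = 1) (lam : ι → X → ℝ)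
    {M N : ℕ} (A : Finset (Fin M)) (hA : A.card = N) :
    ∑ ω : Fin M → X, (∏ i, μ (ω i)) *
        (Finset.univ.sup' Finset.univ_nonempty fun s => ∑ i ∈ A, lam s (ω i))
    = ∑ ω : Fin N → X, (∏ i, μ (ω i)) *
        (Finset.univ.sup' Finset.univ_nonempty fun s => ∑ i, lam s (ω i)) := by
  classical
  set φ := Equiv.piEquivPiSubtypeProd (fun i : Fin M => i ∈ A) (fun _ => X) with hφ
  have step1 : ∑ ω : Fin M → X, (∏ i, μ (ω i)) *
        (Finset.univ.sup' Finset.univ_nonempty fun s => ∑ i ∈ A, lam s (ω i))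
      = ∑ f : {i : Fin M // i ∈ A} → X, (∏ b, μ (f b)) *
        (Finset.univ.sup' Finset.univ_nonempty fun s => ∑ b, lam s (f b)) := by
    rw [← Equiv.sum_comp φ.symm, Fintype.sum_prod_type]
    refine Finset.sum_congr rfl fun f _ => ?_
    have hval : ∀ (g : {i : Fin M // ¬ i ∈ A} → X) (b : {i : Fin M // i ∈ A}),
        φ.symm (f, g) b.1 = f b := by
      intro g b
      simp [hφ, Equiv.piEquivPiSubtypeProd_symm_apply, b.2]
    have hval' : ∀ (g : {i : Fin M // ¬ i ∈ A} → X) (b : {i : Fin M // ¬ i ∈ A}),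
        φ.symm (f, g) b.1 = g b := by
      intro g b
      simp [hφ, Equiv.piEquivPiSubtypeProd_symm_apply, b.2]
    calc ∑ g : {i : Fin M // ¬ i ∈ A} → X, (∏ i, μ (φ.symm (f, g) i)) *
            (Finset.univ.sup' Finset.univ_nonempty fun s => ∑ i ∈ A, lam s (φ.symm (f, g) i))
        = ∑ g : {i : Fin M // ¬ i ∈ A} → X,
            ((∏ b, μ (f b)) * ∏ b, μ (g b)) *
            (Finset.univ.sup' Finset.univ_nonempty fun s => ∑ b, lam s (f b)) := by
          refine Finset.sum_congr rfl fun g _ => ?_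
          congr 1
          · rw [← Fintype.prod_subtype_mul_prod_subtype (fun i => i ∈ A) (fun i => μ (φ.symm (f, g) i))]
            congr 1
            · refine Finset.prod_congr ?_ (fun b _ => by rw [hval])
              congr 1 <;> exact Subsingleton.elim _ _
            · refine Finset.prod_congr ?_ (fun b _ => by rw [hval'])
              congr 1 <;> exact Subsingleton.elim _ _
          · refine Finset.sup'_congr _ rfl fun s _ => ?_
            rw [← Finset.sum_attach A (fun i => lam s (φ.symm (f, g) i)),
              ← Finset.univ_eq_attach]
            exact Finset.sum_congr rfl (fun b _ => by rw [hval])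
      _ = (∏ b, μ (f b)) *
            (Finset.univ.sup' Finset.univ_nonempty fun s => ∑ b, lam s (f b)) := by
          rw [← Finset.sum_mul, ← Finset.mul_sum]
          rw [aux_sum_prod μ hμ1]
          ring
  rw [step1]
  have hcard : Fintype.card {i : Fin M // i ∈ A} = N := by
    rw [Fintype.card_coe, hA]
  exact aux_reindex μ lam (Fintype.equivFinOfCardEq hcard)

end Marg


/-- For `N ≤ M` and a finite family of nonnegative weights `λ^S`, if `W̃` (resp. `W`) is the
multiset of `M` (resp. `N`) i.i.d. samples from `μ` on a finite set `X`, then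
`E[sup_S ∑_x W(x) λ^S(x)] ≥ (N/M) E[sup_S ∑_x W̃(x) λ^S(x)]` (sums over samples). -/
theorem stmt9 {X ι : Type*} [Fintype X] [Fintype ι] [Nonempty ι]
    (μ : X → ℝ) (hμ0 : ∀ x, 0 ≤ μ x) (hμ1 : ∑ x, μ x = 1)
    (N M : ℕ) (hN : 0 < N) (hNM : N ≤ M)
    (lam : ι → X → ℝ) (hlam : ∀ s x, 0 ≤ lam s x) :
    ((N : ℝ) / M) * ∑ ω : Fin M → X, (∏ i, μ (ω i)) *
        (Finset.univ.sup' Finset.univ_nonempty fun s => ∑ i, lam s (ω i))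
    ≤ ∑ ω : Fin N → X, (∏ i, μ (ω i)) *
        (Finset.univ.sup' Finset.univ_nonempty fun s => ∑ i, lam s (ω i)) := by
  classical
  have hM : 0 < M := lt_of_lt_of_le hN hNM
  set 𝒜 := Finset.powersetCard N (Finset.univ : Finset (Fin M)) with h𝒜
  set C : ℝ := ((M - 1).choose (N - 1) : ℝ) with hC
  -- counting identity
  have hcount : ∀ g : Fin M → ℝ, ∑ A ∈ 𝒜, ∑ i ∈ A, g i = C * ∑ i, g i := by
    intro g
    calc ∑ A ∈ 𝒜, ∑ i ∈ A, g i
        = ∑ A ∈ 𝒜, ∑ i : Fin M, if i ∈ A then g i else 0 := by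
          refine Finset.sum_congr rfl fun A _ => ?_
          rw [Finset.sum_ite_mem, Finset.univ_inter]
      _ = ∑ i : Fin M, ∑ A ∈ 𝒜, if i ∈ A then g i else 0 := Finset.sum_comm
      _ = ∑ i : Fin M, C * g i := by
          refine Finset.sum_congr rfl fun i _ => ?_
          rw [← Finset.sum_filter, Finset.sum_const, nsmul_eq_mul, aux_card_filter hN i]
      _ = C * ∑ i, g i := by rw [Finset.mul_sum]
  -- pointwise inequality
  have hpt : ∀ ω : Fin M → X,
      C * (Finset.univ.sup' Finset.univ_nonempty fun s => ∑ i, lam s (ω i))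
      ≤ ∑ A ∈ 𝒜, Finset.univ.sup' Finset.univ_nonempty fun s => ∑ i ∈ A, lam s (ω i) := by
    intro ω
    obtain ⟨s0, -, hs0⟩ := Finset.exists_mem_eq_sup' (Finset.univ_nonempty (α := ι))
      (fun s => ∑ i, lam s (ω i))
    rw [hs0, ← hcount (fun i => lam s0 (ω i))]
    exact Finset.sum_le_sum fun A _ =>
      Finset.le_sup' (fun s => ∑ i ∈ A, lam s (ω i)) (Finset.mem_univ s0)
  -- expectation inequality
  have hsup0 : ∀ {K : ℕ} (ω : Fin K → X),
      0 ≤ Finset.univ.sup' Finset.univ_nonempty fun s => ∑ i, lam s (ω i) := by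
    intro K ω
    obtain ⟨s⟩ := ‹Nonempty ι›
    exact le_trans (Finset.sum_nonneg fun i _ => hlam s (ω i))
      (Finset.le_sup' (fun s => ∑ i, lam s (ω i)) (Finset.mem_univ s))
  have hprod0 : ∀ {K : ℕ} (ω : Fin K → X), (0:ℝ) ≤ ∏ i, μ (ω i) := fun ω =>
    Finset.prod_nonneg fun i _ => hμ0 _
  have hexp : C * ∑ ω : Fin M → X, (∏ i, μ (ω i)) *
        (Finset.univ.sup' Finset.univ_nonempty fun s => ∑ i, lam s (ω i))
      ≤ (M.choose N : ℝ) * ∑ ω : Fin N → X, (∏ i, μ (ω i)) *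
        (Finset.univ.sup' Finset.univ_nonempty fun s => ∑ i, lam s (ω i)) := by
    calc C * ∑ ω : Fin M → X, (∏ i, μ (ω i)) *
          (Finset.univ.sup' Finset.univ_nonempty fun s => ∑ i, lam s (ω i))
        = ∑ ω : Fin M → X, (∏ i, μ (ω i)) *
          (C * (Finset.univ.sup' Finset.univ_nonempty fun s => ∑ i, lam s (ω i))) := by
          rw [Finset.mul_sum]; refine Finset.sum_congr rfl fun ω _ => by ring
      _ ≤ ∑ ω : Fin M → X, (∏ i, μ (ω i)) *
          (∑ A ∈ 𝒜, Finset.univ.sup' Finset.univ_nonempty fun s => ∑ i ∈ A, lam s (ω i)) :=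
          Finset.sum_le_sum fun ω _ => mul_le_mul_of_nonneg_left (hpt ω) (hprod0 ω)
      _ = ∑ A ∈ 𝒜, ∑ ω : Fin M → X, (∏ i, μ (ω i)) *
          (Finset.univ.sup' Finset.univ_nonempty fun s => ∑ i ∈ A, lam s (ω i)) := by
          rw [Finset.sum_comm]
          exact Finset.sum_congr rfl fun ω _ => Finset.mul_sum _ _ _
      _ = ∑ A ∈ 𝒜, ∑ ω : Fin N → X, (∏ i, μ (ω i)) *
          (Finset.univ.sup' Finset.univ_nonempty fun s => ∑ i, lam s (ω i)) := by
          refine Finset.sum_congr rfl fun A hA => ?_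
          exact aux_marg μ hμ1 lam A (Finset.mem_powersetCard.1 hA).2
      _ = (M.choose N : ℝ) * ∑ ω : Fin N → X, (∏ i, μ (ω i)) *
          (Finset.univ.sup' Finset.univ_nonempty fun s => ∑ i, lam s (ω i)) := by
          rw [Finset.sum_const, nsmul_eq_mul, h𝒜, Finset.card_powersetCard,
            Finset.card_univ, Fintype.card_fin]
  -- conclude using N * choose M N = M * choose (M-1) (N-1)
  have hid : (N : ℝ) * (M.choose N : ℝ) = (M : ℝ) * C := by
    rw [hC]
    norm_cast
    obtain ⟨M', rfl⟩ : ∃ M', M = M' + 1 := ⟨M - 1, by omega⟩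
    obtain ⟨N', rfl⟩ : ∃ N', N = N' + 1 := ⟨N - 1, by omega⟩
    simp only [Nat.add_sub_cancel]
    rw [mul_comm, ← Nat.add_one_mul_choose_eq M' N']
  set SM := ∑ ω : Fin M → X, (∏ i, μ (ω i)) *
      (Finset.univ.sup' Finset.univ_nonempty fun s => ∑ i, lam s (ω i)) with hSM
  set SN := ∑ ω : Fin N → X, (∏ i, μ (ω i)) *
      (Finset.univ.sup' Finset.univ_nonempty fun s => ∑ i, lam s (ω i)) with hSN
  rw [div_mul_eq_mul_div, div_le_iff₀ (by positivity : (0:ℝ) < (M:ℝ))]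
  have h0 : (0:ℝ) < (M.choose N : ℝ) := by exact_mod_cast Nat.choose_pos hNM
  have h1 : (M.choose N : ℝ) * ((N:ℝ) * SM) ≤ (M.choose N : ℝ) * (SN * (M:ℝ)) := by
    calc (M.choose N : ℝ) * ((N:ℝ) * SM) = ((N:ℝ) * (M.choose N : ℝ)) * SM := by ring
      _ = ((M:ℝ) * C) * SM := by rw [hid]
      _ = (M:ℝ) * (C * SM) := by ring
      _ ≤ (M:ℝ) * ((M.choose N : ℝ) * SN) := mul_le_mul_of_nonneg_left hexp (by positivity)
      _ = (M.choose N : ℝ) * (SN * (M:ℝ)) := by ring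
  exact le_of_mul_le_mul_left h1 h0
end
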